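/- arXiv:1004.3704 — 6 statements merged into one kernel-verified Lean document; each statement's English description precedes it below -/
import Mathlib

section
/- Let g: ℝ^N → [0, ∞) be continuous, and let g** denote its convex envelope. Then for every ξ ∈ ℝ^N and every δ > 0 there exist m ∈ {0,…,N}, points ξ_0,…,ξ_m ∈ ℝ^N and weights θ_0,…,θ_m ∈ (0,1] with Σ_j θ_j = 1, ξ = Σ_j θ_j ξ_j, g**(ξ) ≤ Σ_{j=0}^m θ_j g(ξ_j) ≤ g**(ξ) + δ, and such that the vectors ξ_j − ξ_0, j = 1,…,m, are linearly independent. -/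
/-!
`hullEnvelope g x` is the infimum of the heights `t` with `(x, t)` in the convex hull of the graph
of `g`. For `g ≥ 0` it is a real-valued convex function on `ℝ^N`, hence continuous, so by
Hahn–Banach it is the supremum of its affine minorants; as it lies below `g`, it equals `g**`.
A point `(ξ, t)` of the hull with `t < g**(ξ) + δ` is a finite convex combination of graph points.
Carathéodory's elimination, run along an affine dependence whose sign is chosen so that
`∑ θⱼ g(ξⱼ)` does not increase, then shrinks the support to affinely independent points while the
cost stays in `[g**(ξ), t]`.
-/

open Set

/-- The convex envelope `g**` of `g`, as the pointwise supremum of all affine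
functions lying below `g`. -/
noncomputable def convEnv {N : ℕ} (g : (Fin N → ℝ) → ℝ) (ξ : Fin N → ℝ) : ℝ :=
  sSup {r : ℝ | ∃ A : (Fin N → ℝ) →ᵃ[ℝ] ℝ, (∀ μ, A μ ≤ g μ) ∧ r = A ξ}

section Reduction

open Finset

variable {E : Type*} [AddCommGroup E] [Module ℝ E]

theorem exists_reweight_vanishing_of_not_affineIndependent (f : E → ℝ) {t : Finset E}
    (ht : ¬AffineIndependent ℝ ((↑) : t → E)) {w : E → ℝ} (hw : ∀ x ∈ t, 0 ≤ w x) :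
    ∃ y ∈ t, ∃ w' : E → ℝ, (∀ x ∈ t, 0 ≤ w' x) ∧ w' y = 0 ∧
      ∑ x ∈ t, w' x = ∑ x ∈ t, w x ∧ ∑ x ∈ t, w' x • x = ∑ x ∈ t, w x • x ∧
      ∑ x ∈ t, w' x * f x ≤ ∑ x ∈ t, w x * f x := by
  classical
  obtain ⟨c, hcvec, hcsum, hcne, hcost⟩ : ∃ c : E → ℝ, ∑ x ∈ t, c x • x = 0 ∧
      ∑ x ∈ t, c x = 0 ∧ (∃ x ∈ t, c x ≠ 0) ∧ 0 ≤ ∑ x ∈ t, c x * f x := by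
    obtain ⟨c, hcvec, hcsum, x, hx, hcx⟩ :=
      exists_nontrivial_relation_sum_zero_of_not_affine_ind ht
    rcases le_total 0 (∑ x ∈ t, c x * f x) with h | h
    · exact ⟨c, hcvec, hcsum, ⟨x, hx, hcx⟩, h⟩
    · refine ⟨-c, ?_, ?_, ⟨x, hx, neg_ne_zero.2 hcx⟩, ?_⟩ <;>
        simpa [neg_smul, sum_neg_distrib]
  obtain ⟨x₀, hx₀, hcx₀⟩ := exists_pos_of_sum_zero_of_exists_nonzero c hcsum hcne
  obtain ⟨y, hy, hymin⟩ := {x ∈ t | 0 < c x}.exists_min_image (fun x => w x / c x)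
    ⟨x₀, mem_filter.2 ⟨hx₀, hcx₀⟩⟩
  rw [mem_filter] at hy
  -- the longest step along `-c` that keeps every weight nonnegative
  set r := w y / c y
  have hr : 0 ≤ r := div_nonneg (hw y hy.1) hy.2.le
  refine ⟨y, hy.1, fun x => w x - r * c x, fun x hx => ?_, ?_, ?_, ?_, ?_⟩
  · rcases le_or_gt (c x) 0 with hcx | hcx
    · linarith [hw x hx, mul_nonpos_of_nonneg_of_nonpos hr hcx]
    · have := (le_div_iff₀ hcx).1 (hymin x (mem_filter.2 ⟨hx, hcx⟩))
      linarith
  · simp [r, hy.2.ne']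
  · rw [sum_sub_distrib, ← mul_sum, hcsum, mul_zero, sub_zero]
  · simp only [sub_smul, mul_smul, sum_sub_distrib, ← smul_sum, hcvec, smul_zero, sub_zero]
  · simp only [sub_mul, mul_assoc, sum_sub_distrib, ← mul_sum]
    linarith [mul_nonneg hr hcost]

theorem exists_affineIndependent_reweight (f : E → ℝ) (t : Finset E) {w : E → ℝ}
    (hw : ∀ x ∈ t, 0 ≤ w x) :
    ∃ s ⊆ t, AffineIndependent ℝ ((↑) : s → E) ∧ ∃ u : E → ℝ, (∀ x ∈ s, 0 < u x) ∧
      ∑ x ∈ s, u x = ∑ x ∈ t, w x ∧ ∑ x ∈ s, u x • x = ∑ x ∈ t, w x • x ∧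
      ∑ x ∈ s, u x * f x ≤ ∑ x ∈ t, w x * f x := by
  classical
  induction t using Finset.strongInduction generalizing w with
  | H t ih =>
  by_cases ht : AffineIndependent ℝ ((↑) : t → E)
  · refine ⟨{x ∈ t | w x ≠ 0}, filter_subset _ _, ht.mono (coe_subset.2 (filter_subset _ _)), w,
      fun x hx => (hw x (mem_filter.1 hx).1).lt_of_ne' (mem_filter.1 hx).2,
      sum_filter_ne_zero _, sum_filter_of_ne fun x _ h => left_ne_zero_of_smul h,
      (sum_filter_of_ne fun x _ h => left_ne_zero_of_mul h).le⟩
  obtain ⟨y, hy, w', hw', hw'y, hsum, hvec, hcost⟩ :=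
    exists_reweight_vanishing_of_not_affineIndependent f ht hw
  obtain ⟨s, hs, hsind, u, hu, husum, huvec, hucost⟩ :=
    ih (t.erase y) (erase_ssubset hy) fun x hx => hw' x (mem_of_mem_erase hx)
  refine ⟨s, hs.trans (erase_subset y t), hsind, u, hu, ?_, ?_, ?_⟩
  · rw [husum, sum_erase _ hw'y, hsum]
  · rw [huvec, sum_erase _ (by rw [hw'y, zero_smul]), hvec]
  · rw [sum_erase _ (by rw [hw'y, zero_mul])] at hucost
    exact hucost.trans hcost

end Reduction

section HullEnvelope

variable {E : Type*} [AddCommGroup E] [Module ℝ E] {g : E → ℝ} {A : E →ᵃ[ℝ] ℝ}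

noncomputable def hullEnvelope (g : E → ℝ) (x : E) : ℝ :=
  sInf {t | (x, t) ∈ convexHull ℝ (range fun y => (y, g y))}

theorem mem_convexHull_graph_iff {x : E} {t : ℝ} :
    (x, t) ∈ convexHull ℝ (range fun y => (y, g y)) ↔
      ∃ (s : Finset E) (w : E → ℝ), (∀ y ∈ s, 0 ≤ w y) ∧ ∑ y ∈ s, w y = 1 ∧
        ∑ y ∈ s, w y • y = x ∧ ∑ y ∈ s, w y * g y = t := by
  rw [convexHull_range_eq_exists_affineCombination, mem_ofPred_eq]
  refine exists₂_congr fun s w => and_congr_right fun _ => and_congr_right fun hw => ?_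
  rw [Finset.affineCombination_eq_linear_combination s _ w hw, Prod.ext_iff, Prod.fst_sum,
    Prod.snd_sum]
  simp

theorem le_of_mem_convexHull_graph (hA : ∀ y, A y ≤ g y) {x : E} {t : ℝ}
    (h : (x, t) ∈ convexHull ℝ (range fun y => (y, g y))) : A x ≤ t := by
  have hepi : Convex ℝ {p : E × ℝ | A p.1 ≤ p.2} := by
    have : {p : E × ℝ | A p.1 ≤ p.2} =
        ⇑(A.comp AffineMap.fst - AffineMap.snd : E × ℝ →ᵃ[ℝ] ℝ) ⁻¹' Iic 0 := by
      ext p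
      simp
    rw [this]
    exact (convex_Iic 0).affine_preimage _
  exact convexHull_min (range_subset_iff.2 hA) hepi h

theorem hullEnvelope_le_of_mem (hA : ∀ y, A y ≤ g y) {x : E} {t : ℝ}
    (h : (x, t) ∈ convexHull ℝ (range fun y => (y, g y))) : hullEnvelope g x ≤ t :=
  csInf_le ⟨A x, fun _ => le_of_mem_convexHull_graph hA⟩ h

theorem hullEnvelope_le (hA : ∀ y, A y ≤ g y) (x : E) : hullEnvelope g x ≤ g x :=
  hullEnvelope_le_of_mem hA (subset_convexHull ℝ _ (mem_range_self x))

theorem le_hullEnvelope (hA : ∀ y, A y ≤ g y) (x : E) : A x ≤ hullEnvelope g x :=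
  le_csInf ⟨g x, subset_convexHull ℝ _ (mem_range_self x)⟩ fun _ =>
    le_of_mem_convexHull_graph hA

theorem exists_mem_convexHull_graph_lt_hullEnvelope_add (g : E → ℝ) (x : E) {ε : ℝ}
    (hε : 0 < ε) :
    ∃ t, (x, t) ∈ convexHull ℝ (range fun y => (y, g y)) ∧ t < hullEnvelope g x + ε :=
  exists_lt_of_csInf_lt ⟨g x, subset_convexHull ℝ _ (mem_range_self x)⟩
    (lt_add_of_pos_right _ hε)

theorem convexOn_hullEnvelope (hA : ∀ y, A y ≤ g y) : ConvexOn ℝ univ (hullEnvelope g) := by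
  refine ⟨convex_univ, fun x _ y _ a b ha hb hab => le_of_forall_pos_le_add fun ε hε => ?_⟩
  obtain ⟨s, hs, hslt⟩ := exists_mem_convexHull_graph_lt_hullEnvelope_add g x hε
  obtain ⟨t, ht, htlt⟩ := exists_mem_convexHull_graph_lt_hullEnvelope_add g y hε
  have hmem : (a • x + b • y, a * s + b * t) ∈ convexHull ℝ (range fun y => (y, g y)) := by
    simpa using convex_convexHull ℝ _ hs ht ha hb hab
  calc hullEnvelope g (a • x + b • y) ≤ a * s + b * t := hullEnvelope_le_of_mem hA hmem
    _ ≤ a * (hullEnvelope g x + ε) + b * (hullEnvelope g y + ε) := by gcongr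
    _ = a • hullEnvelope g x + b • hullEnvelope g y + ε := by
      simp only [smul_eq_mul]; linear_combination ε * hab

end HullEnvelope

theorem convEnv_eq_hullEnvelope {N : ℕ} {g : (Fin N → ℝ) → ℝ} {A : (Fin N → ℝ) →ᵃ[ℝ] ℝ}
    (hA : ∀ μ, A μ ≤ g μ) (ξ : Fin N → ℝ) : convEnv g ξ = hullEnvelope g ξ := by
  have hconv := convexOn_hullEnvelope hA
  have hcont : Continuous (hullEnvelope g) :=
    continuousOn_univ.1 (hconv.continuousOn isOpen_univ)
  refine le_antisymm (csSup_le ⟨A ξ, A, hA, rfl⟩ ?_)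
    (le_of_forall_lt_imp_le_of_dense fun a ha => ?_)
  · rintro _ ⟨B, hB, rfl⟩
    exact le_hullEnvelope hB ξ
  · obtain ⟨l, c, hle, rfl⟩ := hconv.exists_affine_le_of_lt (𝕜 := ℝ) (mem_univ ξ) ha isClosed_univ
      (hcont.lowerSemicontinuous.lowerSemicontinuousOn _)
    refine le_csSup ⟨g ξ, ?_⟩ ?_
    · rintro _ ⟨B, hB, rfl⟩
      exact hB ξ
    refine ⟨l.toLinearMap.toAffineMap + AffineMap.const ℝ _ c, fun μ => ?_, ?_⟩
    · simpa using (hle ⟨μ, mem_univ μ⟩).trans (hullEnvelope_le hA μ)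
    · simp

theorem AffineIndependent.linearIndependent_vsub_succ {k V P : Type*} [Ring k] [AddCommGroup V]
    [Module k V] [AddTorsor V P] {m : ℕ} {p : Fin (m + 1) → P} (hp : AffineIndependent k p) :
    LinearIndependent k (fun j : Fin m => p j.succ -ᵥ p 0) :=
  ((affineIndependent_iff_linearIndependent_vsub k p 0).1 hp).comp
    (fun j => ⟨j.succ, j.succ_ne_zero⟩) fun _ _ h => Fin.succ_injective _ (congrArg Subtype.val h)

theorem Finset.exists_fin_of_affineIndependent {E : Type*} [AddCommGroup E] [Module ℝ E]
    {s : Finset E} (hs : AffineIndependent ℝ ((↑) : s → E)) {u : E → ℝ}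
    (hu : ∀ x ∈ s, 0 < u x) (hsum : ∑ x ∈ s, u x = 1) (f : E → ℝ) :
    ∃ (m : ℕ) (p : Fin (m + 1) → E) (θ : Fin (m + 1) → ℝ), (∀ j, θ j ∈ Set.Ioc (0 : ℝ) 1) ∧
      ∑ j, θ j = 1 ∧ ∑ j, θ j • p j = ∑ x ∈ s, u x • x ∧
      ∑ j, θ j * f (p j) = ∑ x ∈ s, u x * f x ∧
      LinearIndependent ℝ (fun j : Fin m => p j.succ - p 0) := by
  obtain ⟨m, hm⟩ : ∃ m, s.card = m + 1 :=
    Nat.exists_eq_add_one_of_ne_zero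
      (card_pos.2 (nonempty_of_sum_ne_zero (hsum ▸ one_ne_zero))).ne'
  set e := (s.equivFinOfCardEq hm).symm
  have hθsum : ∑ j, u (e j) = 1 := by rw [e.sum_comp (fun x => u x), s.sum_coe_sort u, hsum]
  refine ⟨m, fun j => e j, fun j => u (e j), fun j => ⟨hu _ (e j).2, ?_⟩, hθsum,
    by rw [e.sum_comp (fun x => u x • (x : E)), s.sum_coe_sort fun x => u x • x],
    by rw [e.sum_comp (fun x => u x * f x), s.sum_coe_sort fun x => u x * f x],
    (hs.comp_embedding e.toEmbedding).linearIndependent_vsub_succ⟩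
  exact hθsum ▸ single_le_sum (fun i _ => (hu _ (e i).2).le) (mem_univ j)

theorem caratheodory_affinely_independent_general
    (N : ℕ) (g : (Fin N → ℝ) → ℝ) (hg0 : ∀ μ, 0 ≤ g μ)
    (ξ : Fin N → ℝ) (δ : ℝ) (hδ : 0 < δ) :
    ∃ m : ℕ, m ≤ N ∧
      ∃ (ξs : Fin (m + 1) → (Fin N → ℝ)) (θ : Fin (m + 1) → ℝ),
        (∀ j, θ j ∈ Set.Ioc (0:ℝ) 1) ∧
        (∑ j, θ j) = 1 ∧
        ξ = ∑ j, θ j • ξs j ∧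
        convEnv g ξ ≤ ∑ j, θ j * g (ξs j) ∧
        (∑ j, θ j * g (ξs j)) ≤ convEnv g ξ + δ ∧
        LinearIndependent ℝ (fun j : Fin m => ξs j.succ - ξs 0) := by
  have hA : ∀ μ, (0 : (Fin N → ℝ) →ᵃ[ℝ] ℝ) μ ≤ g μ := hg0
  obtain ⟨t, ht, htlt⟩ := exists_mem_convexHull_graph_lt_hullEnvelope_add g ξ hδ
  obtain ⟨s, w, hw0, hw1, rfl, rfl⟩ := mem_convexHull_graph_iff.1 ht
  obtain ⟨s', -, hs', u, hu0, hu1, huξ, hucost⟩ := exists_affineIndependent_reweight g s hw0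
  obtain ⟨m, ξs, θ, hθ, hθ1, hθξ, hθcost, hLI⟩ :=
    s'.exists_fin_of_affineIndependent hs' hu0 (hu1.trans hw1) g
  have hmem : (∑ x ∈ s, w x • x, ∑ x ∈ s', u x * g x) ∈
      convexHull ℝ (range fun y => (y, g y)) :=
    mem_convexHull_graph_iff.2 ⟨s', u, fun x hx => (hu0 x hx).le, hu1.trans hw1, huξ, rfl⟩
  refine ⟨m, by simpa using hLI.fintype_card_le_finrank, ξs, θ, hθ, hθ1, by rw [hθξ, huξ],
    ?_, ?_, hLI⟩ <;> rw [convEnv_eq_hullEnvelope hA, hθcost]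
  · exact hullEnvelope_le_of_mem hA hmem
  · linarith

/-- Carathéodory-type theorem with affinely independent points:
for continuous `g ≥ 0`, every value `g**(ξ)` is approximated within `δ` by a convex
combination `Σ θ_j g(ξ_j)` with `ξ = Σ θ_j ξ_j`, at most `N+1` points, and
`ξ_j − ξ_0` linearly independent. -/
theorem caratheodory_affinely_independent
    (N : ℕ) (g : (Fin N → ℝ) → ℝ) (hg : Continuous g) (hg0 : ∀ μ, 0 ≤ g μ)
    (ξ : Fin N → ℝ) (δ : ℝ) (hδ : 0 < δ) :
    ∃ m : ℕ, m ≤ N ∧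
      ∃ (ξs : Fin (m + 1) → (Fin N → ℝ)) (θ : Fin (m + 1) → ℝ),
        (∀ j, θ j ∈ Set.Ioc (0:ℝ) 1) ∧
        (∑ j, θ j) = 1 ∧
        ξ = ∑ j, θ j • ξs j ∧
        convEnv g ξ ≤ ∑ j, θ j * g (ξs j) ∧
        (∑ j, θ j * g (ξs j)) ≤ convEnv g ξ + δ ∧
        LinearIndependent ℝ (fun j : Fin m => ξs j.succ - ξs 0) :=
  caratheodory_affinely_independent_general N g hg0 ξ δ hδ
end

section
/- Let g: ℝ^N → [0,∞) be continuous and suppose there exist constants p > 1, C > 0 with (1/C)|μ|^p − C ≤ g(μ) ≤ C|μ|^p + C for all μ ∈ ℝ^N. Then for every ξ ∈ ℝ^N there exist m ≤ N, points ξ_0,…,ξ_m and weights θ_j ∈ (0,1] with Σθ_j = 1, ξ = Σθ_j ξ_j, g**(ξ) = Σ_j θ_j g(ξ_j), the vectors ξ_j − ξ_0 (j ≥ 1) linearly independent, and moreover |ξ_j| ≤ K(|ξ| + 1) for all j, where K depends only on p and C. -/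
/-!
By Carathéodory's theorem it suffices to find an affine minorant `A` of `g` with
`A ξ = g** ξ` such that `ξ` lies in the convex hull of the contact set `{g = A}`.
Minorants that are nonnegative at `ξ` have slopes bounded by the upper growth bound, so they
form a compact family and the supremum defining `g** ξ` is attained. Feeding this slope bound
into the lower growth bound confines the contact set to the ball of radius `K (‖ξ‖ + 1)`.
If `ξ` were not in the (compact) convex hull of the contact set, a functional separating them
could be added to `A` with a small positive weight: small enough on a compact set, where
`g - A > 0` away from the contact set, and harmless near infinity, where `g - A` grows like
`‖μ‖ ^ p`. This gives a minorant that is larger at `ξ`.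
-/

open Set

open Filter

theorem exists_pos_mul_le_of_eventually_le {X : Type*} [TopologicalSpace X] {h φ : X → ℝ}
    (hh : Continuous h) (hφ : Continuous φ) (hh0 : ∀ x, 0 ≤ h x)
    (hpos : ∀ x, 0 ≤ φ x → 0 < h x) (hfar : ∀ᶠ x in cocompact X, φ x ≤ h x) :
    ∃ η > 0, ∀ x, η * φ x ≤ h x := by
  obtain ⟨K, hK, hKfar⟩ := mem_cocompact.1 hfar
  have hS : IsCompact (K ∩ {x | 0 ≤ φ x}) := hK.inter_right (isClosed_le continuous_const hφ)
  obtain ⟨M, hM⟩ := hS.bddAbove_image (f := fun x => φ x / h x)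
    (hφ.continuousOn.div hh.continuousOn fun x hx => (hpos x hx.2).ne')
  have hM1 : 0 < max M 1 := lt_max_of_lt_right one_pos
  refine ⟨(max M 1)⁻¹, inv_pos.2 hM1, fun x => ?_⟩
  rw [inv_mul_le_iff₀ hM1]
  rcases lt_or_ge (φ x) 0 with hneg | hnonneg
  · nlinarith [hh0 x]
  by_cases hxK : x ∈ K
  · have hratio : φ x / h x ≤ max M 1 := (hM ⟨x, ⟨hxK, hnonneg⟩, rfl⟩).trans (le_max_left _ _)
    rwa [div_le_iff₀ (hpos x hnonneg)] at hratio
  · have hfar_x : φ x ≤ h x := hKfar hxK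
    nlinarith [le_max_right M 1, hh0 x]

theorem eventually_mul_add_le_rpow {p : ℝ} (hp : 1 < p) {α : ℝ} (hα : 0 < α) (L M : ℝ) :
    ∀ᶠ t in atTop, L * t + M ≤ α * t ^ p := by
  filter_upwards [(tendsto_rpow_atTop (sub_pos.2 hp)).eventually_ge_atTop ((|L| + |M|) / α),
    eventually_ge_atTop 1] with t hpow ht
  have hsplit : t ^ p = t ^ (p - 1) * t := by
    rw [← Real.rpow_add_one (by positivity), sub_add_cancel]
  have hLM : |L| + |M| ≤ α * t ^ (p - 1) := by rwa [div_le_iff₀' hα] at hpow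
  rw [hsplit]
  nlinarith [le_abs_self L, le_abs_self M, abs_nonneg L, abs_nonneg M]

theorem le_max_rpow_inv_of_rpow_le {p D s : ℝ} (hp : 1 < p) (hs : 0 ≤ s)
    (h : s ^ p ≤ D * (1 + s)) : s ≤ max 1 ((2 * D) ^ (p - 1)⁻¹) := by
  refine le_max_iff.2 ((le_or_gt s 1).imp id fun hs1 => ?_)
  have hsplit : s ^ p = s ^ (p - 1) * s := by
    rw [← Real.rpow_add_one (by positivity), sub_add_cancel]
  have hpow : 1 ≤ s ^ (p - 1) := Real.one_le_rpow hs1.le (by linarith)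
  have hrpow : s ^ (p - 1) ≤ 2 * D := by nlinarith
  exact (Real.le_rpow_inv_iff_of_pos hs (by linarith) (by linarith)).2 hrpow

section NormedSpace

variable {E : Type*} [NormedAddCommGroup E] [NormedSpace ℝ E] {p C : ℝ} {g : E → ℝ}

theorem opNorm_le_of_affine_minorant (hp : 0 ≤ p) (hC : 0 ≤ C)
    (hup : ∀ μ, g μ ≤ C * ‖μ‖ ^ p + C) {ℓ : E →L[ℝ] ℝ} {c : ℝ} {ξ : E}
    (hmin : ∀ μ, ℓ μ + c ≤ g μ) (hξ : 0 ≤ ℓ ξ + c) :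
    ‖ℓ‖ ≤ C * ((2 * (‖ξ‖ + 1)) ^ p + 1) / (‖ξ‖ + 1) := by
  have ha : 0 < ‖ξ‖ + 1 := by positivity
  have hball : ∀ v, ‖v‖ ≤ ‖ξ‖ + 1 → ℓ v ≤ C * ((2 * (‖ξ‖ + 1)) ^ p + 1) := fun v hv => by
    have hnorm : ‖ξ + v‖ ≤ 2 * (‖ξ‖ + 1) := by linarith [norm_add_le ξ v]
    have hpow := Real.rpow_le_rpow (norm_nonneg _) hnorm hp
    have hminv := hmin (ξ + v)
    rw [map_add] at hminv
    nlinarith [hup (ξ + v)]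
  refine ℓ.opNorm_bound_of_ball_bound ha _ fun v hv => ?_
  rw [mem_closedBall_zero_iff] at hv
  have hneg := hball (-v) (by rwa [norm_neg])
  rw [map_neg] at hneg
  exact abs_le.2 ⟨by linarith, hball v hv⟩

theorem norm_le_of_contact (hp : 1 < p) (hC : 0 < C)
    (hlow : ∀ μ, (1 / C) * ‖μ‖ ^ p - C ≤ g μ) (hup : ∀ μ, g μ ≤ C * ‖μ‖ ^ p + C)
    {ℓ : E →L[ℝ] ℝ} {c : ℝ} {ξ x : E} (hmin : ∀ μ, ℓ μ + c ≤ g μ) (hξ : 0 ≤ ℓ ξ + c)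
    (hx : g x ≤ ℓ x + c) :
    ‖x‖ ≤ max 1 ((2 * (C ^ 2 * (2 ^ p + 4))) ^ (p - 1)⁻¹) * (‖ξ‖ + 1) := by
  set a := ‖ξ‖ + 1
  have ha : 1 ≤ a := by simp [a]
  set s := ‖x‖ / a
  have hs : 0 ≤ s := by positivity
  have hxs : ‖x‖ = s * a := by simp [s, div_mul_cancel₀ _ (by positivity : a ≠ 0)]
  have hslope : ‖ℓ‖ * a ≤ C * (2 ^ p * a ^ p + 1) := by
    rw [← Real.mul_rpow (by norm_num) (by positivity)]
    exact (le_div_iff₀ (by positivity)).1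
      (opNorm_le_of_affine_minorant (by linarith) hC.le hup hmin hξ)
  have hA : 1 ≤ a ^ p := Real.one_le_rpow ha (by linarith)
  have hξp : ‖ξ‖ ^ p ≤ a ^ p := Real.rpow_le_rpow (norm_nonneg _) (by simp [a]) (by linarith)
  have hdiff : ℓ x - ℓ ξ ≤ ‖ℓ‖ * a * (s + 1) := by
    rw [← map_sub]
    refine (le_abs_self _).trans ((ℓ.le_opNorm _).trans ?_)
    nlinarith [norm_sub_le x ξ, norm_nonneg ℓ]
  have hxp : ‖x‖ ^ p = s ^ p * a ^ p := by rw [hxs, Real.mul_rpow hs (by positivity)]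
  have hchain : (1 / C) * (s ^ p * a ^ p) - C ≤
      C * a ^ p + C + C * (2 ^ p * a ^ p + 1) * (s + 1) := by
    have hlowx := hlow x
    rw [hxp] at hlowx
    linarith [hup ξ, hmin ξ, mul_le_mul_of_nonneg_left hξp hC.le,
      mul_le_mul_of_nonneg_right hslope (by linarith : 0 ≤ s + 1)]
  have hsp : s ^ p ≤ C ^ 2 * (2 ^ p + 4) * (1 + s) := by
    have hcancel : C * ((1 / C) * (s ^ p * a ^ p)) = s ^ p * a ^ p := by field_simp
    have hmul : s ^ p * a ^ p ≤ C ^ 2 * (a ^ p + 2 + (2 ^ p * a ^ p + 1) * (s + 1)) := by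
      nlinarith [mul_le_mul_of_nonneg_left hchain hC.le, hcancel]
    have hA4 : a ^ p + 2 + (2 ^ p * a ^ p + 1) * (s + 1) ≤ (2 ^ p + 4) * (1 + s) * a ^ p := by
      nlinarith [mul_nonneg hs (by linarith : (0 : ℝ) ≤ a ^ p - 1)]
    refine le_of_mul_le_mul_right ?_ (by linarith : 0 < a ^ p)
    nlinarith [mul_le_mul_of_nonneg_left hA4 (sq_nonneg C)]
  calc ‖x‖ = s * a := hxs
    _ ≤ _ := by gcongr; exact le_max_rpow_inv_of_rpow_le hp hs hsp

end NormedSpace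

section FiniteDimensional

variable {E : Type*} [NormedAddCommGroup E] [NormedSpace ℝ E] [FiniteDimensional ℝ E]
  {p C : ℝ} {g : E → ℝ}

theorem exists_fin_affineIndependent_of_mem_convexHull {s : Set E} {x : E}
    (hx : x ∈ convexHull ℝ s) :
    ∃ m ≤ Module.finrank ℝ E, ∃ (z : Fin (m + 1) → E) (w : Fin (m + 1) → ℝ),
      (∀ j, z j ∈ s) ∧ (∀ j, w j ∈ Ioc (0 : ℝ) 1) ∧ ∑ j, w j = 1 ∧ x = ∑ j, w j • z j ∧
      LinearIndependent ℝ (fun j : Fin m => z j.succ - z 0) := by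
  obtain ⟨ι, _, z, w, hzs, hind, hpos, hsum, rfl⟩ := eq_pos_convex_span_of_mem_convexHull hx
  have hcard_pos : Fintype.card ι ≠ 0 := by
    intro hcard
    rw [Fintype.card_eq_zero_iff] at hcard
    simp at hsum
  have hcard_le : Fintype.card ι ≤ Module.finrank ℝ E + 1 :=
    hind.card_le_finrank_succ.trans (Nat.succ_le_succ (Submodule.finrank_le _))
  obtain ⟨m, hm⟩ := Nat.exists_eq_add_one_of_ne_zero hcard_pos
  let e : Fin (m + 1) ≃ ι := (Fintype.equivFinOfCardEq hm).symm
  have hsum' : ∑ j, w (e j) = 1 := (e.sum_comp w).trans hsum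
  refine ⟨m, by omega, z ∘ e, w ∘ e, fun j => hzs (mem_range_self _),
    fun j => ⟨hpos _,
      hsum' ▸ Finset.single_le_sum (fun i _ => (hpos (e i)).le) (Finset.mem_univ j)⟩,
    hsum', (e.sum_comp fun i => w i • z i).symm, ?_⟩
  have hli := (affineIndependent_iff_linearIndependent_vsub ℝ _ 0).1
    (hind.comp_embedding e.toEmbedding)
  exact hli.comp (fun j : Fin m => ⟨j.succ, j.succ_ne_zero⟩)
    fun i j hij => Fin.succ_injective _ (congrArg Subtype.val hij)

theorem IsCompact.convexHull_of_finiteDimensional {s : Set E} (hs : IsCompact s) :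
    IsCompact (convexHull ℝ s) := by
  let comb (m : ℕ) (q : (Fin (m + 1) → ℝ) × (Fin (m + 1) → E)) : E := ∑ j, q.1 j • q.2 j
  have hunion : convexHull ℝ s = ⋃ m ∈ Iic (Module.finrank ℝ E),
      comb m '' (stdSimplex ℝ (Fin (m + 1)) ×ˢ univ.pi fun _ => s) := by
    refine Subset.antisymm (fun x hx => ?_) (iUnion₂_subset fun m _ => ?_)
    · obtain ⟨m, hm, z, w, hzs, hw, hsum, rfl, -⟩ :=
        exists_fin_affineIndependent_of_mem_convexHull hx
      exact mem_biUnion hm ⟨(w, z), ⟨⟨fun j => (hw j).1.le, hsum⟩, fun j _ => hzs j⟩, rfl⟩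
    · rintro - ⟨⟨w, z⟩, ⟨⟨hw0, hw1⟩, hz⟩, rfl⟩
      exact (convex_convexHull ℝ s).sum_mem (fun j _ => hw0 j) hw1
        fun j _ => subset_convexHull ℝ s (hz j (mem_univ j))
  rw [hunion]
  exact (finite_Iic _).isCompact_biUnion fun m _ =>
    ((isCompact_stdSimplex ℝ _).prod (isCompact_univ_pi fun _ => hs)).image (by fun_prop)

theorem exists_affine_minorant_isMax (hp : 0 ≤ p) (hC : 0 ≤ C)
    (hup : ∀ μ, g μ ≤ C * ‖μ‖ ^ p + C) (hg0 : ∀ μ, 0 ≤ g μ) (ξ : E) :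
    ∃ (ℓ : E →L[ℝ] ℝ) (c : ℝ), (∀ μ, ℓ μ + c ≤ g μ) ∧ 0 ≤ ℓ ξ + c ∧
      ∀ (ℓ' : E →L[ℝ] ℝ) (c' : ℝ), (∀ μ, ℓ' μ + c' ≤ g μ) → ℓ' ξ + c' ≤ ℓ ξ + c := by
  set B := C * ((2 * (‖ξ‖ + 1)) ^ p + 1) / (‖ξ‖ + 1)
  set T := {q : (E →L[ℝ] ℝ) × ℝ | (∀ μ, q.1 μ + q.2 ≤ g μ) ∧ 0 ≤ q.1 ξ + q.2}
  have hT_sub : T ⊆ Metric.closedBall 0 B ×ˢ Icc (-(B * ‖ξ‖)) (g 0) := by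
    rintro ⟨ℓ, c⟩ ⟨hmin, hξ⟩
    have hℓ := opNorm_le_of_affine_minorant hp hC hup hmin hξ
    have hc := hmin 0
    rw [map_zero, zero_add] at hc
    refine ⟨mem_closedBall_zero_iff.2 hℓ, ?_, hc⟩
    have hℓξ := (le_abs_self _).trans (ℓ.le_opNorm ξ)
    nlinarith [norm_nonneg ξ]
  have hT_closed : IsClosed T := by
    simp only [T, ofPred_and, ofPred_forall]
    exact (isClosed_iInter fun μ => isClosed_le (by fun_prop) continuous_const).inter
      (isClosed_le continuous_const (by fun_prop))
  have hT_compact : IsCompact T :=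
    ((isCompact_closedBall 0 B).prod isCompact_Icc).of_isClosed_subset hT_closed hT_sub
  have hT_zero : ((0 : E →L[ℝ] ℝ), (0 : ℝ)) ∈ T := ⟨fun μ => by simpa using hg0 μ, by simp⟩
  obtain ⟨⟨ℓ, c⟩, ⟨hmin, hξ⟩, hmax⟩ :=
    hT_compact.exists_isMaxOn ⟨_, hT_zero⟩ (f := fun q => q.1 ξ + q.2) (by fun_prop)
  refine ⟨ℓ, c, hmin, hξ, fun ℓ' c' hmin' => ?_⟩
  rcases le_or_gt 0 (ℓ' ξ + c') with hξ' | hξ'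
  · exact hmax (a := (ℓ', c')) ⟨hmin', hξ'⟩
  · linarith

theorem mem_convexHull_contactSet (hp : 1 < p) (hC : 0 < C) (hg : Continuous g)
    (hlow : ∀ μ, (1 / C) * ‖μ‖ ^ p - C ≤ g μ) {ℓ : E →L[ℝ] ℝ} {c : ℝ} {ξ : E}
    (hmin : ∀ μ, ℓ μ + c ≤ g μ)
    (hmax : ∀ (ℓ' : E →L[ℝ] ℝ) (c' : ℝ), (∀ μ, ℓ' μ + c' ≤ g μ) → ℓ' ξ + c' ≤ ℓ ξ + c)
    (hZ : IsCompact {x | g x = ℓ x + c}) :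
    ξ ∈ convexHull ℝ {x | g x = ℓ x + c} := by
  by_contra hξZ
  obtain ⟨f, u, hfZ, hfξ⟩ := geometric_hahn_banach_closed_point (convex_convexHull ℝ _)
    hZ.convexHull_of_finiteDimensional.isClosed hξZ
  have hpos : ∀ x, 0 ≤ f x - u → 0 < g x - (ℓ x + c) := fun x hx =>
    (sub_nonneg.2 (hmin x)).lt_of_ne fun hzero =>
      (hfZ x (subset_convexHull ℝ _ (sub_eq_zero.1 hzero.symm))).not_ge (by linarith)
  have hfar : ∀ᶠ x in cocompact E, f x - u ≤ g x - (ℓ x + c) :=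
    (tendsto_norm_cocompact_atTop.eventually (eventually_mul_add_le_rpow hp (one_div_pos.2 hC)
      (‖f‖ + ‖ℓ‖) (C + c - u))).mono fun x hx => by
        linarith [hlow x, (Real.le_norm_self _).trans (f.le_opNorm x),
          (Real.le_norm_self _).trans (ℓ.le_opNorm x)]
  obtain ⟨η, hη, hle⟩ := exists_pos_mul_le_of_eventually_le (by fun_prop) (by fun_prop)
    (fun x => sub_nonneg.2 (hmin x)) hpos hfar
  have hbetter := hmax (ℓ + η • f) (c - η * u) fun μ => by
    simp only [add_apply, smul_apply, smul_eq_mul]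
    linarith [hle μ]
  simp only [add_apply, smul_apply, smul_eq_mul] at hbetter
  nlinarith

end FiniteDimensional

theorem convEnv_eq_of_isMax {N : ℕ} {g : (Fin N → ℝ) → ℝ} {ξ : Fin N → ℝ}
    {ℓ : (Fin N → ℝ) →L[ℝ] ℝ} {c : ℝ} (hmin : ∀ μ, ℓ μ + c ≤ g μ)
    (hmax : ∀ (ℓ' : (Fin N → ℝ) →L[ℝ] ℝ) (c' : ℝ), (∀ μ, ℓ' μ + c' ≤ g μ) →
      ℓ' ξ + c' ≤ ℓ ξ + c) :
    convEnv g ξ = ℓ ξ + c := by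
  refine IsGreatest.csSup_eq ⟨⟨(ℓ : (Fin N → ℝ) →ₗ[ℝ] ℝ).toAffineMap + AffineMap.const ℝ _ c,
    fun μ => by simpa using hmin μ, by simp⟩, ?_⟩
  rintro - ⟨A, hA, rfl⟩
  have hdecomp : ∀ μ, A μ = LinearMap.toContinuousLinearMap A.linear μ + A 0 :=
    congrFun (AffineMap.decomp A)
  rw [hdecomp]
  exact hmax _ _ fun μ => hdecomp μ ▸ hA μ

/-- under two-sided `p`-growth, the Carathéodory representation of the
convex envelope is exact (`δ = 0`) and the points are bounded by `K(|ξ|+1)` with `K`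
depending only on `p` and `C`. -/
theorem caratheodory_exact_with_bound
    (p C : ℝ) (hp : 1 < p) (hC : 0 < C) :
    ∃ K : ℝ, 0 < K ∧
      ∀ (N : ℕ) (g : (Fin N → ℝ) → ℝ), Continuous g → (∀ μ, 0 ≤ g μ) →
        (∀ μ : Fin N → ℝ, (1 / C) * ‖μ‖ ^ p - C ≤ g μ ∧ g μ ≤ C * ‖μ‖ ^ p + C) →
        ∀ ξ : Fin N → ℝ,
          ∃ m : ℕ, m ≤ N ∧
            ∃ (ξs : Fin (m + 1) → (Fin N → ℝ)) (θ : Fin (m + 1) → ℝ),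
              (∀ j, θ j ∈ Set.Ioc (0:ℝ) 1) ∧
              (∑ j, θ j) = 1 ∧
              ξ = ∑ j, θ j • ξs j ∧
              convEnv g ξ = ∑ j, θ j * g (ξs j) ∧
              LinearIndependent ℝ (fun j : Fin m => ξs j.succ - ξs 0) ∧
              ∀ j, ‖ξs j‖ ≤ K * (‖ξ‖ + 1) := by
  refine ⟨max 1 ((2 * (C ^ 2 * (2 ^ p + 4))) ^ (p - 1)⁻¹), zero_lt_one.trans_le (le_max_left _ _),
    fun N g hg hg0 hgrowth ξ => ?_⟩
  have hlow μ := (hgrowth μ).1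
  have hup μ := (hgrowth μ).2
  obtain ⟨ℓ, c, hmin, hξ, hmax⟩ := exists_affine_minorant_isMax (by linarith) hC.le hup hg0 ξ
  have hbound {x} (hx : g x = ℓ x + c) := norm_le_of_contact hp hC hlow hup hmin hξ hx.le
  have hZ : IsCompact {x | g x = ℓ x + c} :=
    (isCompact_closedBall 0 _).of_isClosed_subset (isClosed_eq hg (by fun_prop))
      fun x hx => mem_closedBall_zero_iff.2 (hbound hx)
  obtain ⟨m, hm, ξs, θ, hξsZ, hθ, hsum, rfl, hli⟩ :=
    exists_fin_affineIndependent_of_mem_convexHull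
      (mem_convexHull_contactSet hp hC hg hlow hmin hmax hZ)
  refine ⟨m, by simpa using hm, ξs, θ, hθ, hsum, rfl, ?_, hli, fun j => hbound (hξsZ j)⟩
  rw [convEnv_eq_of_isMax hmin hmax]
  simp only [mem_ofPred_eq] at hξsZ
  simp only [hξsZ, map_sum, map_smul, smul_eq_mul, mul_add, Finset.sum_add_distrib,
    ← Finset.sum_mul, hsum, one_mul]
end

section
/- Let g: ℝ^N → ℝ be lower semicontinuous with superlinear growth (g(μ)/|μ| → ∞ as |μ| → ∞). Then for every ξ ∈ ℝ^N, the supremum in g**(ξ) = sup{A(ξ) : A: ℝ^N → ℝ affine, A ≤ g} is attained by some affine function A_ξ with A_ξ ≤ g and A_ξ(ξ) = g**(ξ). -/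
open Set Filter

/-! Superlinear growth makes `g` coercive, so by lower semicontinuity it is bounded below and
has affine minorants. Write a minorant as `A μ = a + ∑ i, (μ i - ξ i) * b i`. As long as `a` is at
least the value `a₀` at `ξ` of one fixed minorant, testing `A ≤ g` at `ξ` and `ξ ± eᵢ` confines
`(b, a)` to a box, and `A ≤ g` is a closed condition on `(b, a)`; so these parameters form a
compact set, on which the value `a = A ξ` attains its maximum. -/

theorem tendsto_cocompact_atTop_of_tendsto_div_norm {E : Type*} [NormedAddCommGroup E]
    [ProperSpace E] {g : E → ℝ} (h : Tendsto (fun x => g x / ‖x‖) (cocompact E) atTop) :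
    Tendsto g (cocompact E) atTop := by
  have hnorm := tendsto_norm_cocompact_atTop (E := E)
  refine (h.atTop_mul_atTop₀ hnorm).congr' ?_
  filter_upwards [hnorm.eventually_gt_atTop 0] with x hx
  exact div_mul_cancel₀ _ hx.ne'

theorem LowerSemicontinuous.bddBelow_range_of_tendsto_cocompact {α β : Type*}
    [TopologicalSpace α] [LinearOrder β] [Nonempty β] {f : α → β} (hf : LowerSemicontinuous f)
    (h : Tendsto f (cocompact α) atTop) : BddBelow (range f) := by
  obtain ⟨b⟩ := ‹Nonempty β›
  obtain ⟨K, hK, hKb⟩ := mem_cocompact.mp (h.eventually_ge_atTop b)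
  obtain ⟨m, hm⟩ := (hf.lowerSemicontinuousOn K).bddBelow_of_isCompact hK
  refine ⟨min m b, forall_mem_range.mpr fun x => ?_⟩
  by_cases hx : x ∈ K
  · exact (min_le_left _ _).trans (hm (mem_image_of_mem f hx))
  · exact (min_le_right _ _).trans (hKb hx)

section AffineOfSlope

variable {ι : Type*} [Fintype ι]

noncomputable def affineOfSlope (ξ b : ι → ℝ) (a : ℝ) : (ι → ℝ) →ᵃ[ℝ] ℝ :=
  (Fintype.linearCombination ℝ b).toAffineMap +
    AffineMap.const ℝ (ι → ℝ) (a - Fintype.linearCombination ℝ b ξ)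

theorem affineOfSlope_apply (ξ b : ι → ℝ) (a : ℝ) (μ : ι → ℝ) :
    affineOfSlope ξ b a μ = a + ∑ i, (μ i - ξ i) * b i := by
  simp only [affineOfSlope, AffineMap.coe_add, LinearMap.coe_toAffineMap, AffineMap.coe_const,
    Pi.add_apply, Function.const_apply, Fintype.linearCombination_apply, smul_eq_mul, sub_mul,
    Finset.sum_sub_distrib]
  ring

@[simp]
theorem affineOfSlope_apply_self (ξ b : ι → ℝ) (a : ℝ) : affineOfSlope ξ b a ξ = a := by
  simp [affineOfSlope_apply]

theorem affineOfSlope_apply_add_single [DecidableEq ι] (ξ b : ι → ℝ) (a : ℝ) (i : ι) (t : ℝ) :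
    affineOfSlope ξ b a (ξ + Pi.single i t) = a + t * b i := by
  simp [affineOfSlope_apply, Pi.single_apply]

theorem continuous_affineOfSlope_apply (ξ μ : ι → ℝ) :
    Continuous fun p : (ι → ℝ) × ℝ => affineOfSlope ξ p.1 p.2 μ := by
  simp only [affineOfSlope_apply]
  fun_prop

theorem exists_eq_affineOfSlope (A : (ι → ℝ) →ᵃ[ℝ] ℝ) (ξ : ι → ℝ) :
    ∃ b, A = affineOfSlope ξ b (A ξ) := by
  classical
  refine ⟨fun i => A.linear (Pi.single i 1), AffineMap.ext fun μ => ?_⟩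
  have h := A.linearMap_vsub μ ξ
  rw [vsub_eq_sub, vsub_eq_sub, LinearMap.pi_apply_eq_sum_univ] at h
  rw [affineOfSlope_apply, ← sub_eq_iff_eq_add', ← h]
  refine Finset.sum_congr rfl fun i _ => ?_
  rw [Pi.sub_apply, smul_eq_mul]
  congr 2
  ext j
  simp [Pi.single_apply, eq_comm]

theorem mem_Icc_of_affineOfSlope_le [DecidableEq ι] {g : (ι → ℝ) → ℝ} {ξ b : ι → ℝ}
    {a₀ a : ℝ} (ha : a₀ ≤ a) (hg : ∀ μ, affineOfSlope ξ b a μ ≤ g μ) (i : ι) :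
    b i ∈ Icc (a₀ - g (ξ + Pi.single i (-1))) (g (ξ + Pi.single i 1) - a₀) := by
  have h₁ := hg (ξ + Pi.single i 1)
  have h₂ := hg (ξ + Pi.single i (-1))
  rw [affineOfSlope_apply_add_single] at h₁ h₂
  constructor <;> linarith

theorem isCompact_setOf_affineOfSlope_le (g : (ι → ℝ) → ℝ) (ξ : ι → ℝ) (a₀ : ℝ) :
    IsCompact {p : (ι → ℝ) × ℝ | a₀ ≤ p.2 ∧ ∀ μ, affineOfSlope ξ p.1 p.2 μ ≤ g μ} := by
  classical
  refine IsCompact.of_isClosed_subset ((isCompact_univ_pi fun i => isCompact_Icc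
    (a := a₀ - g (ξ + Pi.single i (-1))) (b := g (ξ + Pi.single i 1) - a₀)).prod
    (isCompact_Icc (a := a₀) (b := g ξ))) ?_ ?_
  · rw [ofPred_and, ofPred_forall]
    exact (isClosed_le continuous_const continuous_snd).inter <| isClosed_iInter fun μ =>
      isClosed_le (continuous_affineOfSlope_apply ξ μ) continuous_const
  · rintro ⟨b, a⟩ ⟨ha₀, hg⟩
    refine ⟨fun i _ => mem_Icc_of_affineOfSlope_le ha₀ hg i, ha₀, ?_⟩
    simpa using hg ξ

end AffineOfSlope

theorem exists_affine_minorant_maximal_at {ι : Type*} [Fintype ι]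
    {g : (ι → ℝ) → ℝ} (ξ : ι → ℝ) (hg : ∃ A : (ι → ℝ) →ᵃ[ℝ] ℝ, ∀ μ, A μ ≤ g μ) :
    ∃ A : (ι → ℝ) →ᵃ[ℝ] ℝ, (∀ μ, A μ ≤ g μ) ∧
      ∀ A' : (ι → ℝ) →ᵃ[ℝ] ℝ, (∀ μ, A' μ ≤ g μ) → A' ξ ≤ A ξ := by
  obtain ⟨A₀, hA₀⟩ := hg
  set T := {p : (ι → ℝ) × ℝ | A₀ ξ ≤ p.2 ∧ ∀ μ, affineOfSlope ξ p.1 p.2 μ ≤ g μ}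
  have mem_T : ∀ A : (ι → ℝ) →ᵃ[ℝ] ℝ, (∀ μ, A μ ≤ g μ) → A₀ ξ ≤ A ξ →
      ∃ b, (b, A ξ) ∈ T := fun A hA hle => by
    obtain ⟨b, hb⟩ := exists_eq_affineOfSlope A ξ
    exact ⟨b, hle, hb ▸ hA⟩
  obtain ⟨b₀, hb₀⟩ := mem_T A₀ hA₀ le_rfl
  obtain ⟨p, ⟨hp₀, hpg⟩, hpmax⟩ := (isCompact_setOf_affineOfSlope_le g ξ (A₀ ξ)).exists_isMaxOn
    ⟨_, hb₀⟩ continuous_snd.continuousOn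
  refine ⟨affineOfSlope ξ p.1 p.2, hpg, fun A hA => ?_⟩
  rw [affineOfSlope_apply_self]
  rcases le_total (A ξ) (A₀ ξ) with hle | hle
  · exact hle.trans hp₀
  · obtain ⟨b, hb⟩ := mem_T A hA hle
    exact hpmax hb

/-- for a lower semicontinuous function with superlinear growth, the
supremum defining the convex envelope is attained by an affine function touching
`g**` at `ξ`. -/
theorem convEnv_attained_affine
    (N : ℕ) (g : (Fin N → ℝ) → ℝ)
    (hlsc : LowerSemicontinuous g)
    (hsuper : Tendsto (fun μ : Fin N → ℝ => g μ / ‖μ‖) (Filter.cocompact _) Filter.atTop)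
    (ξ : Fin N → ℝ) :
    ∃ A : (Fin N → ℝ) →ᵃ[ℝ] ℝ, (∀ μ, A μ ≤ g μ) ∧ A ξ = convEnv g ξ := by
  obtain ⟨m, hm⟩ :=
    hlsc.bddBelow_range_of_tendsto_cocompact (tendsto_cocompact_atTop_of_tendsto_div_norm hsuper)
  have hconst : ∀ μ, AffineMap.const ℝ (Fin N → ℝ) m μ ≤ g μ := fun μ => hm (mem_range_self μ)
  obtain ⟨A, hAg, hAmax⟩ := exists_affine_minorant_maximal_at ξ ⟨_, hconst⟩
  refine ⟨A, hAg, (IsGreatest.csSup_eq ?_).symm⟩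
  refine ⟨⟨A, hAg, rfl⟩, ?_⟩
  rintro _ ⟨A', hA'g, rfl⟩
  exact hAmax A' hA'g
end

section
/- Suppose an affine function A: ℝ^N → ℝ satisfies (1/C)|μ|^p − C ≤ A(μ) ≤ C|μ|^p + C for all μ in a convex set S ⊂ ℝ^N, where p > 1 and C > 0. If S is the convex hull of finitely many points and contains a fixed point ξ, then S is bounded, with diameter bound depending only on p, C, and |ξ|; in particular every extreme point ξ_j of S satisfies |ξ_j| ≤ K(|ξ|+1) for a constant K = K(p, C). -/
/-!
Put `B = ‖ξ‖ + 1` and `μ ∈ S`. The point `x` on the segment from `ξ` to `μ` at parameter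
`t = B / (‖μ‖ + B)` lies in the ball of radius `2B`, so `A x ≤ C (2B)^p + C`. Since `A` is affine and
bounded below by `-C` at `ξ`, this gives `t · ‖μ‖^p / C ≤ C (2B)^p + 2C`, that is
`B ‖μ‖^p ≲ (‖μ‖ + B) B^p`. As `p > 1` the left side grows faster in `‖μ‖`, whence `‖μ‖ ≤ K(p, C) · B`.
-/

open Set AffineMap

section

variable {E : Type*} [NormedAddCommGroup E] [NormedSpace ℝ E]

theorem norm_lineMap_le (ξ μ : E) {t : ℝ} (ht : 0 ≤ t) :
    ‖lineMap ξ μ t‖ ≤ ‖ξ‖ + t * (‖ξ‖ + ‖μ‖) := by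
  rw [lineMap_apply_module', add_comm]
  calc ‖ξ + t • (μ - ξ)‖ ≤ ‖ξ‖ + t * ‖μ - ξ‖ := by
        simpa [norm_smul, abs_of_nonneg ht] using norm_add_le ξ (t • (μ - ξ))
    _ ≤ ‖ξ‖ + t * (‖ξ‖ + ‖μ‖) := by
        gcongr; rw [add_comm]; exact norm_sub_le μ ξ

theorem mul_rpow_le_of_affine_trapped {A : E →ᵃ[ℝ] ℝ} {S : Set E} (hS : Convex ℝ S)
    {p C : ℝ} (hC : 0 ≤ C)
    (htrap : ∀ μ ∈ S, (1 / C) * ‖μ‖ ^ p - C ≤ A μ ∧ A μ ≤ C * ‖μ‖ ^ p + C)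
    {ξ μ : E} (hξ : ξ ∈ S) (hμ : μ ∈ S) {t : ℝ} (ht : t ∈ Icc 0 1) :
    t * ((1 / C) * ‖μ‖ ^ p) ≤ C * ‖lineMap ξ μ t‖ ^ p + 2 * C := by
  have hAξ := (htrap ξ hξ).1
  have hAμ := (htrap μ hμ).1
  have hAx := (htrap _ (hS.lineMap_mem hξ hμ ht)).2
  rw [A.apply_lineMap, lineMap_apply_ring] at hAx
  have : 0 ≤ (1 / C) * ‖ξ‖ ^ p := by positivity
  nlinarith [ht.1, ht.2]

theorem le_rpow_inv_mul_of_rpow_le_mul {m B p c : ℝ} (hm : 0 < m) (hB : 0 ≤ B) (hp : 1 < p)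
    (hc : 0 ≤ c) (h : m ^ p ≤ c * B ^ (p - 1) * m) : m ≤ c ^ (p - 1)⁻¹ * B := by
  have hp₁ : 0 < p - 1 := by linarith
  have hm' : m ^ (p - 1) ≤ c * B ^ (p - 1) := by
    rw [Real.rpow_sub_one hm.ne', div_le_iff₀ hm]; exact h
  rw [← Real.rpow_le_rpow_iff hm.le (by positivity) hp₁, Real.mul_rpow (by positivity) hB,
    Real.rpow_inv_rpow hc hp₁.ne']
  exact hm'

noncomputable def trapConstant (p C : ℝ) : ℝ := 1 + (2 * (C ^ 2 * (2 ^ p + 2))) ^ (p - 1)⁻¹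

theorem one_le_trapConstant (p C : ℝ) : 1 ≤ trapConstant p C :=
  le_add_of_nonneg_right (Real.rpow_nonneg (by positivity) _)

theorem le_trapConstant_mul {m B p C : ℝ} (hB : 1 ≤ B) (hp : 1 < p)
    (h : B * m ^ p ≤ C ^ 2 * ((2 * B) ^ p + 2) * (m + B)) : m ≤ trapConstant p C * B := by
  rcases le_or_gt m B with hmB | hBm
  · nlinarith [one_le_trapConstant p C]
  set c := C ^ 2 * (2 ^ p + 2)
  have hBp : B ^ p = B ^ (p - 1) * B := by
    rw [Real.rpow_sub_one (by positivity)]; field_simp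
  have hB_le : 1 ≤ B ^ p := Real.one_le_rpow hB (by linarith)
  have hbound : C ^ 2 * ((2 * B) ^ p + 2) ≤ c * B ^ p := by
    rw [Real.mul_rpow zero_le_two (by positivity)]
    have : 0 ≤ C ^ 2 := sq_nonneg C
    nlinarith
  have hpow : m ^ p ≤ 2 * c * B ^ (p - 1) * m := by
    refine le_of_mul_le_mul_left ?_ (by positivity : 0 < B)
    calc B * m ^ p ≤ C ^ 2 * ((2 * B) ^ p + 2) * (m + B) := h
      _ ≤ c * B ^ p * (2 * m) := mul_le_mul hbound (by linarith) (by linarith) (by positivity)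
      _ = B * (2 * c * B ^ (p - 1) * m) := by rw [hBp]; ring
  calc m ≤ (2 * c) ^ (p - 1)⁻¹ * B :=
        le_rpow_inv_mul_of_rpow_le_mul (by linarith) (by linarith) hp (by positivity) hpow
    _ ≤ trapConstant p C * B := by unfold trapConstant; gcongr; linarith

theorem subset_closedBall_of_affine_trapped {A : E →ᵃ[ℝ] ℝ} {S : Set E} (hS : Convex ℝ S)
    {p C : ℝ} (hp : 1 < p) (hC : 0 < C)
    (htrap : ∀ μ ∈ S, (1 / C) * ‖μ‖ ^ p - C ≤ A μ ∧ A μ ≤ C * ‖μ‖ ^ p + C)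
    {ξ : E} (hξ : ξ ∈ S) : S ⊆ Metric.closedBall 0 (trapConstant p C * (‖ξ‖ + 1)) := by
  intro μ hμ
  rw [mem_closedBall_zero_iff]
  set B := ‖ξ‖ + 1
  have hB : 1 ≤ B := le_add_of_nonneg_left (norm_nonneg ξ)
  have hμB : 0 < ‖μ‖ + B := by positivity
  set t := B / (‖μ‖ + B)
  have ht : t ∈ Icc 0 1 :=
    ⟨by positivity, div_le_one_of_le₀ (by linarith [norm_nonneg μ]) hμB.le⟩
  have hx : ‖lineMap ξ μ t‖ ≤ 2 * B :=
    calc ‖lineMap ξ μ t‖ ≤ ‖ξ‖ + t * (‖ξ‖ + ‖μ‖) := norm_lineMap_le ξ μ ht.1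
      _ ≤ ‖ξ‖ + t * (‖μ‖ + B) := by gcongr ‖ξ‖ + t * ?_; linarith
      _ = ‖ξ‖ + B := by simp only [t]; field_simp
      _ ≤ 2 * B := by linarith
  have hxp : ‖lineMap ξ μ t‖ ^ p ≤ (2 * B) ^ p :=
    Real.rpow_le_rpow (norm_nonneg _) hx (by linarith)
  apply le_trapConstant_mul hB hp
  calc B * ‖μ‖ ^ p = t * ((1 / C) * ‖μ‖ ^ p) * (C * (‖μ‖ + B)) := by simp only [t]; field_simp
    _ ≤ (C * ‖lineMap ξ μ t‖ ^ p + 2 * C) * (C * (‖μ‖ + B)) := by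
        gcongr; exact mul_rpow_le_of_affine_trapped hS hC.le htrap hξ hμ ht
    _ ≤ (C * (2 * B) ^ p + 2 * C) * (C * (‖μ‖ + B)) := by gcongr
    _ = C ^ 2 * ((2 * B) ^ p + 2) * (‖μ‖ + B) := by ring

end

/-- an affine function trapped between `(1/C)|μ|^p − C` and `C|μ|^p + C`
on a polytope `S` containing `ξ` forces `S` to be bounded, with a diameter bound
depending only on `p`, `C` and `|ξ|`; in particular every extreme point of `S` is
bounded by `K(|ξ|+1)` with `K = K(p,C)`. -/
theorem affine_trapped_polytope_bounded
    (p C : ℝ) (hp : 1 < p) (hC : 0 < C) :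
    ∃ K : ℝ, 0 < K ∧
      ∃ D : ℝ → ℝ,
        ∀ (N : ℕ) (A : (Fin N → ℝ) →ᵃ[ℝ] ℝ) (S : Set (Fin N → ℝ)) (ξ : Fin N → ℝ),
          (∃ P : Finset (Fin N → ℝ), S = convexHull ℝ (P : Set (Fin N → ℝ))) →
          ξ ∈ S →
          (∀ μ ∈ S, (1 / C) * ‖μ‖ ^ p - C ≤ A μ ∧ A μ ≤ C * ‖μ‖ ^ p + C) →
          Bornology.IsBounded S ∧
          Metric.diam S ≤ D ‖ξ‖ ∧
          (∀ μ ∈ S.extremePoints ℝ, ‖μ‖ ≤ K * (‖ξ‖ + 1)) := by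
  have hK : 0 < trapConstant p C := zero_lt_one.trans_le (one_le_trapConstant p C)
  refine ⟨trapConstant p C, hK, fun r ↦ 2 * (trapConstant p C * (r + 1)), ?_⟩
  rintro N A S ξ ⟨P, rfl⟩ hξ htrap
  have hball := subset_closedBall_of_affine_trapped (convex_convexHull ℝ _) hp hC htrap hξ
  exact ⟨Metric.isBounded_closedBall.subset hball,
    Metric.diam_le_of_subset_closedBall (by positivity) hball,
    fun μ hμ ↦ mem_closedBall_zero_iff.1 (hball (extremePoints_subset hμ))⟩
end

section
/- Let m ≤ N and let ξ_0,…,ξ_m ∈ ℝ^N, θ_0,…,θ_m ∈ (0,1] with Σ_{j=0}^m θ_j = 1 and with ξ_1 − ξ_0,…,ξ_m − ξ_0 linearly independent, and set ξ := Σ_j θ_j ξ_j. Define β_{ij} := (ξ_i^N − ξ^N)/(ξ_i^N − ξ_j^N) if (ξ_i^N − ξ^N)(ξ_j^N − ξ^N) < 0, β_{jj} := 1 if ξ_j^N = ξ^N, and β_{ij} := 0 otherwise. Then there exist α_{ij} ∈ [0,1] (0 ≤ i,j ≤ m) with α_{ij} = α_{ji}, α_{ij} = 0 whenever β_{ij}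 = 0, Σ_{j=0}^m Σ_{i=0}^{j} α_{ij} = 1, θ_j = Σ_{i=0}^m α_{ij} β_{ij} for each j, and ξ = (1/2) Σ_{i,j=0}^m α_{ij}(β_{ij} ξ_j + β_{ji} ξ_i). -/
/-!
Put `c j := ξ_j^N - ξ^N`. Then `∑ θ j * c j = 0`, so both sides of the hyperplane carry the same
mass `S = ∑ θ j * (c j)⁺ = ∑ θ j * (c j)⁻`. Take `α i j := θ i * θ j * |c i - c j| / S` for points
on opposite sides and `α j j := θ j` for points on the hyperplane. Then
`α i j * β i j = θ j * (θ i * |c i|) / S`, and summing over the `i` on the other side of `j`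
returns `θ j`. The remaining identities follow from the symmetry of `α` and `β i j + β j i = 1`.
-/

open Finset

section Triangle

variable {ι M : Type*} [Fintype ι] [LinearOrder ι] [LocallyFiniteOrderBot ι]
  [LocallyFiniteOrderTop ι] [AddCommMonoid M]

theorem sum_Iic_add_sum_Ioi (f : ι → M) (j : ι) :
    ∑ i ∈ Iic j, f i + ∑ i ∈ Ioi j, f i = ∑ i, f i := by
  rw [← sum_union (disjoint_left.2 fun i hi hi' => (mem_Iic.1 hi).not_gt (mem_Ioi.1 hi'))]
  congr 1
  ext i
  simp [le_or_gt]

theorem sum_sum_Iic_eq_sum_sum_of_add_swap (a f : ι → ι → M)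
    (hoff : ∀ i j, i < j → f i j + f j i = a i j) (hdiag : ∀ j, f j j = a j j) :
    ∑ j, ∑ i ∈ Iic j, a i j = ∑ j, ∑ i, f i j := by
  have hcol : ∀ j, ∑ i ∈ Iic j, a i j = ∑ i ∈ Iic j, f i j + ∑ i ∈ Iio j, f j i := by
    intro j
    rw [← Iio_insert, sum_insert (by simp), sum_insert (by simp), ← hdiag, add_assoc,
      ← sum_add_distrib]
    exact congrArg _ (sum_congr rfl fun i hi => (hoff i j (mem_Iio.1 hi)).symm)
  have hswap : ∑ j, ∑ i ∈ Iio j, f j i = ∑ j, ∑ i ∈ Ioi j, f i j :=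
    sum_comm' (fun j i => by simp)
  simp_rw [hcol, sum_add_distrib, hswap, ← sum_add_distrib, sum_Iic_add_sum_Ioi]

end Triangle

theorem sub_ne_zero_of_mul_neg {x y : ℝ} (h : x * y < 0) : x - y ≠ 0 := by
  intro hxy
  rw [sub_eq_zero.1 hxy] at h
  exact (mul_self_nonneg y).not_gt h

theorem abs_sub_mul_div_sub_of_mul_neg {x y : ℝ} (h : x * y < 0) :
    |x - y| * (x / (x - y)) = |x| := by
  have hxy := sub_ne_zero_of_mul_neg h
  rw [mul_div_left_comm]
  rcases hxy.lt_or_gt with hxy | hxy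
  · rw [abs_of_neg hxy, abs_of_neg (by nlinarith), neg_div_self hxy.ne, mul_neg_one]
  · rw [abs_of_pos hxy, abs_of_pos (by nlinarith), div_self hxy.ne', mul_one]

section PosMass

variable {ι : Type*} [Fintype ι]

noncomputable def posMass (θ c : ι → ℝ) : ℝ := ∑ i, θ i * (c i)⁺

variable {θ c : ι → ℝ}

theorem posMass_nonneg (hθ : ∀ i, 0 ≤ θ i) : 0 ≤ posMass θ c :=
  sum_nonneg fun i _ => mul_nonneg (hθ i) (posPart_nonneg _)

theorem sum_mul_negPart_eq_posMass (hc : ∑ i, θ i * c i = 0) :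
    ∑ i, θ i * (c i)⁻ = posMass θ c := by
  rw [eq_comm, posMass, ← sub_eq_zero, ← sum_sub_distrib, ← hc]
  exact sum_congr rfl fun i _ => by rw [← mul_sub, posPart_sub_negPart]

theorem mul_abs_le_posMass (hθ : ∀ i, 0 ≤ θ i) (hc : ∑ i, θ i * c i = 0) (i : ι) :
    θ i * |c i| ≤ posMass θ c := by
  rcases le_total 0 (c i) with hci | hci
  · rw [abs_of_nonneg hci, ← posPart_eq_self.2 hci]
    exact single_le_sum (fun k _ => mul_nonneg (hθ k) (posPart_nonneg _)) (mem_univ i)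
  · rw [abs_of_nonpos hci, ← negPart_eq_neg.2 hci, ← sum_mul_negPart_eq_posMass hc]
    exact single_le_sum (fun k _ => mul_nonneg (hθ k) (negPart_nonneg _)) (mem_univ i)

theorem sum_opposite_side_eq_posMass (hc : ∑ i, θ i * c i = 0) {j : ι} (hj : c j ≠ 0) :
    ∑ i, (if c i * c j < 0 then θ i * |c i| else 0) = posMass θ c := by
  rcases hj.lt_or_gt with hj | hj
  · refine sum_congr rfl fun i _ => ?_
    rcases lt_or_ge 0 (c i) with hci | hci
    · rw [if_pos (mul_neg_of_pos_of_neg hci hj), abs_of_pos hci, posPart_eq_self.2 hci.le]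
    · rw [if_neg (not_lt.2 (mul_nonneg_of_nonpos_of_nonpos hci hj.le)), posPart_eq_zero.2 hci,
        mul_zero]
  · rw [← sum_mul_negPart_eq_posMass hc]
    refine sum_congr rfl fun i _ => ?_
    rcases lt_or_ge (c i) 0 with hci | hci
    · rw [if_pos (mul_neg_of_neg_of_pos hci hj), abs_of_neg hci, negPart_eq_neg.2 hci.le]
    · rw [if_neg (not_lt.2 (mul_nonneg hci hj.le)), negPart_eq_zero.2 hci, mul_zero]

end PosMass

section PairWeight

variable {ι : Type*} [DecidableEq ι]

noncomputable def pairWeight (c : ι → ℝ) (i j : ι) : ℝ :=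
  if c i * c j < 0 then c i / (c i - c j) else if i = j ∧ c j = 0 then 1 else 0

variable {c : ι → ℝ}

theorem pairWeight_add_pairWeight_swap {i j : ι} (h : c i * c j < 0) :
    pairWeight c i j + pairWeight c j i = 1 := by
  have hij := sub_ne_zero_of_mul_neg h
  rw [pairWeight, pairWeight, if_pos h, if_pos (by rwa [mul_comm]), ← neg_sub (c i),
    div_neg, ← sub_eq_add_neg, ← sub_div, div_self hij]

theorem pairWeight_ne_zero {i j : ι} (h : c i * c j < 0) : pairWeight c i j ≠ 0 := by
  rw [pairWeight, if_pos h]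
  exact div_ne_zero (left_ne_zero_of_mul h.ne) (sub_ne_zero_of_mul_neg h)

end PairWeight

section PairCoeff

variable {ι : Type*} [Fintype ι] [DecidableEq ι]

noncomputable def pairCoeff (θ c : ι → ℝ) (i j : ι) : ℝ :=
  if c i * c j < 0 then θ i * θ j * |c i - c j| / posMass θ c
  else if i = j ∧ c j = 0 then θ j else 0

variable {θ c : ι → ℝ}

theorem pairCoeff_comm (θ c : ι → ℝ) (i j : ι) : pairCoeff θ c i j = pairCoeff θ c j i := by
  unfold pairCoeff
  rw [mul_comm (c i), mul_comm (θ i), abs_sub_comm]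
  split_ifs <;> grind

theorem pairCoeff_eq_zero_of_pairWeight_eq_zero {i j : ι} (h : pairWeight c i j = 0) :
    pairCoeff θ c i j = 0 := by
  have hneg : ¬ c i * c j < 0 := fun hij => pairWeight_ne_zero hij h
  unfold pairWeight at h
  rw [if_neg hneg] at h
  rw [pairCoeff, if_neg hneg, if_neg fun hij => by simp [hij] at h]

theorem pairCoeff_nonneg (hθ : ∀ i, 0 ≤ θ i) (i j : ι) : 0 ≤ pairCoeff θ c i j := by
  unfold pairCoeff
  split_ifs
  · exact div_nonneg (mul_nonneg (mul_nonneg (hθ i) (hθ j)) (abs_nonneg _)) (posMass_nonneg hθ)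
  · exact hθ j
  · rfl

theorem pairCoeff_mul_pairWeight (θ c : ι → ℝ) (i j : ι) :
    pairCoeff θ c i j * pairWeight c i j =
      if c i * c j < 0 then θ j * (θ i * |c i|) / posMass θ c
      else if i = j ∧ c j = 0 then θ j else 0 := by
  unfold pairCoeff pairWeight
  split_ifs with h
  · rw [div_mul_eq_mul_div, mul_assoc, abs_sub_mul_div_sub_of_mul_neg h]
    ring
  · rw [mul_one]
  · rw [mul_zero]

theorem sum_pairCoeff_mul_pairWeight (hθ : ∀ i, 0 ≤ θ i) (hc : ∑ i, θ i * c i = 0) (j : ι) :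
    ∑ i, pairCoeff θ c i j * pairWeight c i j = θ j := by
  simp_rw [pairCoeff_mul_pairWeight]
  by_cases hj : c j = 0
  · rw [sum_eq_single j (fun i _ hij => by simp [hj, hij]) (by simp)]
    simp [hj]
  · have hterm : ∀ i, (if c i * c j < 0 then θ j * (θ i * |c i|) / posMass θ c
        else if i = j ∧ c j = 0 then θ j else 0) =
        θ j / posMass θ c * (if c i * c j < 0 then θ i * |c i| else 0) := fun i => by
      split_ifs <;> simp_all [mul_div_right_comm]
    rw [sum_congr rfl fun i _ => hterm i, ← mul_sum, sum_opposite_side_eq_posMass hc hj]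
    refine div_mul_cancel_of_imp fun hS => ?_
    have := mul_abs_le_posMass hθ hc j
    rw [hS] at this
    nlinarith [hθ j, abs_pos.2 hj]

theorem pairCoeff_mul_pairWeight_self (θ c : ι → ℝ) (j : ι) :
    pairCoeff θ c j j * pairWeight c j j = pairCoeff θ c j j := by
  by_cases hj : c j = 0 <;> simp [pairCoeff, pairWeight, hj]

theorem pairCoeff_mul_pairWeight_add_swap (θ c : ι → ℝ) {i j : ι} (hij : i ≠ j) :
    pairCoeff θ c i j * pairWeight c i j + pairCoeff θ c j i * pairWeight c j i =
      pairCoeff θ c i j := by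
  by_cases h : c i * c j < 0
  · rw [pairCoeff_comm θ c j i, ← mul_add, pairWeight_add_pairWeight_swap h, mul_one]
  · simp [pairCoeff, h, hij, hij.symm, mul_comm (c j)]

theorem pairCoeff_le_one (hθ : ∀ i, 0 ≤ θ i) (hθ1 : ∑ i, θ i = 1) (hc : ∑ i, θ i * c i = 0)
    (i j : ι) : pairCoeff θ c i j ≤ 1 := by
  have hS := posMass_nonneg (c := c) hθ
  by_cases h : c i * c j < 0
  · have hij : i ≠ j := by rintro rfl; exact (mul_self_nonneg _).not_gt h
    have hpair : θ i + θ j ≤ 1 := by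
      rw [← hθ1, ← sum_pair hij]
      exact sum_le_sum_of_subset_of_nonneg (subset_univ _) fun k _ _ => hθ k
    rw [← pairCoeff_mul_pairWeight_add_swap θ c hij, pairCoeff_mul_pairWeight,
      pairCoeff_mul_pairWeight, if_pos h, if_pos (by rwa [mul_comm])]
    have hi := mul_le_of_le_one_right (hθ j) (div_le_one_of_le₀ (mul_abs_le_posMass hθ hc i) hS)
    have hj := mul_le_of_le_one_right (hθ i) (div_le_one_of_le₀ (mul_abs_le_posMass hθ hc j) hS)
    rw [← mul_div_assoc] at hi hj
    linarith
  · unfold pairCoeff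
    rw [if_neg h]
    split_ifs
    · rw [← hθ1]
      exact single_le_sum (fun k _ => hθ k) (mem_univ j)
    · exact zero_le_one

end PairCoeff

theorem half_smul_sum_sum_pair_eq_sum_smul {ι M : Type*} [Fintype ι] [AddCommGroup M]
    [Module ℝ M] (θ : ι → ℝ) (α β : ι → ι → ℝ) (v : ι → M) (hα : ∀ i j, α i j = α j i)
    (hθ : ∀ j, θ j = ∑ i, α i j * β i j) :
    (1 / 2 : ℝ) • ∑ i, ∑ j, α i j • (β i j • v j + β j i • v i) = ∑ j, θ j • v j := by
  have hcol : ∑ i, ∑ j, (α i j * β i j) • v j = ∑ j, θ j • v j := by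
    rw [sum_comm]
    exact sum_congr rfl fun j _ => by rw [← sum_smul, hθ j]
  have hrow : ∑ i, ∑ j, (α i j * β j i) • v i = ∑ i, θ i • v i :=
    sum_congr rfl fun i _ => by simp_rw [hθ i, sum_smul, hα i]
  simp_rw [smul_add, smul_smul, sum_add_distrib, hcol, hrow, ← two_smul ℝ, smul_smul]
  norm_num

theorem convex_combination_pairing_general
    (d m : ℕ)
    (ξv : Fin (m + 1) → (Fin (d + 1) → ℝ)) (θ : Fin (m + 1) → ℝ)
    (hθ : ∀ j, θ j ∈ Set.Ioc (0:ℝ) 1) (hθ1 : (∑ j, θ j) = 1)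
    (ξ : Fin (d + 1) → ℝ) (hξ : ξ = ∑ j, θ j • ξv j)
    (β : Fin (m + 1) → Fin (m + 1) → ℝ)
    (hβ : ∀ i j, β i j =
      if (ξv i (Fin.last d) - ξ (Fin.last d)) * (ξv j (Fin.last d) - ξ (Fin.last d)) < 0
      then (ξv i (Fin.last d) - ξ (Fin.last d)) / (ξv i (Fin.last d) - ξv j (Fin.last d))
      else if i = j ∧ ξv j (Fin.last d) = ξ (Fin.last d) then 1 else 0) :
    ∃ α : Fin (m + 1) → Fin (m + 1) → ℝ,
      (∀ i j, α i j ∈ Set.Icc (0:ℝ) 1) ∧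
      (∀ i j, α i j = α j i) ∧
      (∀ i j, β i j = 0 → α i j = 0) ∧
      (∑ j, ∑ i ∈ Finset.Iic j, α i j) = 1 ∧
      (∀ j, θ j = ∑ i, α i j * β i j) ∧
      ξ = (1 / 2 : ℝ) • ∑ i, ∑ j, α i j • (β i j • ξv j + β j i • ξv i) := by
  set c : Fin (m + 1) → ℝ := fun j => ξv j (Fin.last d) - ξ (Fin.last d)
  have hθ0 : ∀ j, 0 ≤ θ j := fun j => (hθ j).1.le
  have hβc : β = pairWeight c := by
    ext i j
    rw [hβ, pairWeight, sub_sub_sub_cancel_right]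
    simp only [c, sub_eq_zero]
  have hc : ∑ j, θ j * c j = 0 := by
    simp [c, mul_sub, sum_sub_distrib, ← sum_mul, hθ1, hξ, Finset.sum_apply]
  have hmarg : ∀ j, θ j = ∑ i, pairCoeff θ c i j * β i j := fun j => by
    rw [hβc, sum_pairCoeff_mul_pairWeight hθ0 hc]
  refine ⟨pairCoeff θ c, fun i j => ⟨pairCoeff_nonneg hθ0 i j, pairCoeff_le_one hθ0 hθ1 hc i j⟩,
    pairCoeff_comm θ c, fun i j h => pairCoeff_eq_zero_of_pairWeight_eq_zero (hβc ▸ h), ?_, hmarg,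
    ?_⟩
  · rw [sum_sum_Iic_eq_sum_sum_of_add_swap _ (fun i j => pairCoeff θ c i j * β i j)
      (fun i j hij => hβc ▸ pairCoeff_mul_pairWeight_add_swap θ c hij.ne)
      (fun j => hβc ▸ pairCoeff_mul_pairWeight_self θ c j), ← hθ1]
    exact sum_congr rfl fun j _ => (hmarg j).symm
  · rw [half_smul_sum_sum_pair_eq_sum_smul θ _ β ξv (pairCoeff_comm θ c) hmarg, hξ]

/-- splitting a convex combination on a hyperplane into two-point
convex combinations (Lemma 4.4 of the paper). -/
theorem convex_combination_pairing
    (d m : ℕ) (hm : m ≤ d + 1)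
    (ξv : Fin (m + 1) → (Fin (d + 1) → ℝ)) (θ : Fin (m + 1) → ℝ)
    (hθ : ∀ j, θ j ∈ Set.Ioc (0:ℝ) 1) (hθ1 : (∑ j, θ j) = 1)
    (hli : LinearIndependent ℝ (fun j : Fin m => ξv j.succ - ξv 0))
    (ξ : Fin (d + 1) → ℝ) (hξ : ξ = ∑ j, θ j • ξv j)
    (β : Fin (m + 1) → Fin (m + 1) → ℝ)
    (hβ : ∀ i j, β i j =
      if (ξv i (Fin.last d) - ξ (Fin.last d)) * (ξv j (Fin.last d) - ξ (Fin.last d)) < 0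
      then (ξv i (Fin.last d) - ξ (Fin.last d)) / (ξv i (Fin.last d) - ξv j (Fin.last d))
      else if i = j ∧ ξv j (Fin.last d) = ξ (Fin.last d) then 1 else 0) :
    ∃ α : Fin (m + 1) → Fin (m + 1) → ℝ,
      (∀ i j, α i j ∈ Set.Icc (0:ℝ) 1) ∧
      (∀ i j, α i j = α j i) ∧
      (∀ i j, β i j = 0 → α i j = 0) ∧
      (∑ j, ∑ i ∈ Finset.Iic j, α i j) = 1 ∧
      (∀ j, θ j = ∑ i, α i j * β i j) ∧
      ξ = (1 / 2 : ℝ) • ∑ i, ∑ j, α i j • (β i j • ξv j + β j i • ξv i) :=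
  convex_combination_pairing_general d m ξv θ hθ hθ1 ξ hξ β hβ
end

section
/- Let H = {y ∈ ℝ^N : y^N = c} be an affine hyperplane, let S be the intersection of H with the convex hull of finitely many points ξ_0,…,ξ_m ∈ ℝ^N. Then every extreme point of the convex polytope S is either some ξ_j with ξ_j^N = c, or the unique point of intersection of H with a segment [ξ_i, ξ_j] where ξ_i^N and ξ_j^N lie strictly on opposite sides of c. -/
/-!
With `Φ w = ∑ i, w i • ξ i`, the slice `S` is the image under `Φ` of the slice `Δ_c` of the standard
simplex cut out by `∑ i, w i * ξ i (last) = c`. By Krein–Milman, every extreme point of the image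
of a compact set under a continuous affine map lifts to an extreme point, so it suffices to
describe the extreme points `w` of `Δ_c`. If `δ` vanishes off the support of `w` and satisfies
`∑ δ i = 0` and `∑ δ i * ξ i (last) = 0`, then `w ± ε • δ ∈ Δ_c` for small `ε > 0`, which forces
`δ = 0`. Hence `w` has at most two nonzero weights, and two only if the corresponding last
coordinates differ: `w` is a vertex on the hyperplane or a point of an edge crossing it.
-/

open Set Filter Topology

theorem mul_neg_of_mul_add_mul_eq_zero {a b x y : ℝ} (ha : 0 < a) (hb : 0 < b) (hxy : x ≠ y)
    (h : a * x + b * y = 0) : x * y < 0 := by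
  by_contra! hnonneg
  have hy_sq : b * y ^ 2 ≤ 0 := by linear_combination y * h + mul_nonneg ha.le hnonneg
  have hx_sq : a * x ^ 2 ≤ 0 := by linear_combination x * h + mul_nonneg hb.le hnonneg
  have hy : y = 0 := pow_eq_zero_iff two_ne_zero |>.1 <|
    le_antisymm (nonpos_of_mul_nonpos_right hy_sq hb) (sq_nonneg _)
  have hx : x = 0 := pow_eq_zero_iff two_ne_zero |>.1 <|
    le_antisymm (nonpos_of_mul_nonpos_right hx_sq ha) (sq_nonneg _)
  exact hxy (hx.trans hy.symm)

section StdSimplexSlice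

variable {ι : Type*} [Fintype ι]

def stdSimplexSlice (f : ι → ℝ) (c : ℝ) : Set (ι → ℝ) :=
  stdSimplex ℝ ι ∩ {w | ∑ i, w i * f i = c}

theorem isCompact_stdSimplexSlice (f : ι → ℝ) (c : ℝ) : IsCompact (stdSimplexSlice f c) :=
  (isCompact_stdSimplex ℝ ι).inter_right (isClosed_eq (by fun_prop) continuous_const)

theorem exists_pos_forall_abs_lt_add_smul_mem_stdSimplex {w δ : ι → ℝ}
    (hw : w ∈ stdSimplex ℝ ι) (hδw : ∀ i, w i = 0 → δ i = 0) (hδ : ∑ i, δ i = 0) :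
    ∃ r > 0, ∀ t : ℝ, |t| < r → w + t • δ ∈ stdSimplex ℝ ι := by
  have hnonneg : ∀ᶠ t in 𝓝 (0 : ℝ), ∀ i, 0 ≤ w i + t * δ i := by
    refine eventually_all.2 fun i => ?_
    rcases (hw.1 i).eq_or_lt with hwi | hwi
    · simp [hδw i hwi.symm, ← hwi]
    · have hcont : Continuous fun t : ℝ => w i + t * δ i := by fun_prop
      exact (hcont.tendsto' 0 (w i) (by simp)).eventually (eventually_ge_nhds hwi)
  obtain ⟨r, hr, hball⟩ := Metric.eventually_nhds_iff.1 hnonneg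
  refine ⟨r, hr, fun t ht => ⟨fun i => hball (by simpa using ht) i, ?_⟩⟩
  simp [Finset.sum_add_distrib, ← Finset.mul_sum, hw.2, hδ]

variable {f : ι → ℝ} {c : ℝ} {w : ι → ℝ}

theorem eq_zero_of_mem_extremePoints_stdSimplexSlice {δ : ι → ℝ}
    (hw : w ∈ (stdSimplexSlice f c).extremePoints ℝ) (hδw : ∀ i, w i = 0 → δ i = 0)
    (hδ : ∑ i, δ i = 0) (hδf : ∑ i, δ i * f i = 0) : δ = 0 := by
  obtain ⟨⟨hwΔ, hwf : ∑ i, w i * f i = c⟩, hext⟩ := hw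
  obtain ⟨r, hr, hmem⟩ := exists_pos_forall_abs_lt_add_smul_mem_stdSimplex hwΔ hδw hδ
  have hslice : ∀ t : ℝ, |t| < r → w + t • δ ∈ stdSimplexSlice f c := fun t ht =>
    ⟨hmem t ht, by simp [add_mul, Finset.sum_add_distrib, mul_assoc, ← Finset.mul_sum, hδf, hwf]⟩
  have hr2 : |r / 2| < r := by rw [abs_of_pos (by positivity)]; linarith
  have hmid : w ∈ openSegment ℝ (w + (r / 2) • δ) (w + (-(r / 2)) • δ) :=
    ⟨1 / 2, 1 / 2, by norm_num, by norm_num, by norm_num, by module⟩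
  simpa [hr.ne'] using hext (hslice _ hr2) (hslice _ (by rwa [abs_neg])) hmid

variable [DecidableEq ι]

theorem apply_ne_of_mem_extremePoints_stdSimplexSlice
    (hw : w ∈ (stdSimplexSlice f c).extremePoints ℝ) {i j : ι} (hij : i ≠ j)
    (hi : w i ≠ 0) (hj : w j ≠ 0) : f i ≠ f j := by
  intro hf
  have hδ := eq_zero_of_mem_extremePoints_stdSimplexSlice
    (δ := Pi.single i 1 - Pi.single j 1) hw
    (fun k hk => by
      have hki : k ≠ i := by rintro rfl; exact hi hk
      have hkj : k ≠ j := by rintro rfl; exact hj hk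
      simp [hki, hkj])
    (by simp [Finset.sum_sub_distrib])
    (by simp [Pi.single_apply, sub_mul, Finset.sum_sub_distrib, hf])
  simpa [hij] using congrFun hδ i

theorem apply_eq_zero_of_mem_extremePoints_stdSimplexSlice
    (hw : w ∈ (stdSimplexSlice f c).extremePoints ℝ) {i j k : ι} (hij : i ≠ j) (hik : i ≠ k)
    (hjk : j ≠ k) (hi : w i ≠ 0) (hj : w j ≠ 0) : w k = 0 := by
  by_contra hk
  have hδ := eq_zero_of_mem_extremePoints_stdSimplexSlice
    (δ := (f j - f k) • Pi.single i 1 + (f k - f i) • Pi.single j 1 + (f i - f j) • Pi.single k 1)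
    hw
    (fun l hl => by
      have hli : l ≠ i := by rintro rfl; exact hi hl
      have hlj : l ≠ j := by rintro rfl; exact hj hl
      have hlk : l ≠ k := by rintro rfl; exact hk hl
      simp [hli, hlj, hlk])
    (by simp [Pi.single_apply, Finset.sum_add_distrib])
    (by simp [Pi.single_apply, add_mul, Finset.sum_add_distrib]; ring)
  have hδk := congrFun hδ k
  simp [hik.symm, hjk.symm] at hδk
  exact apply_ne_of_mem_extremePoints_stdSimplexSlice hw hij hi hj (by linarith)

theorem mem_extremePoints_stdSimplexSlice (hw : w ∈ (stdSimplexSlice f c).extremePoints ℝ) :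
    (∃ j, w = Pi.single j 1 ∧ f j = c) ∨
      ∃ i j, (f i - c) * (f j - c) < 0 ∧ w ∈ segment ℝ (Pi.single i 1) (Pi.single j 1) := by
  obtain ⟨⟨hw0, hw1⟩, hwf : ∑ i, w i * f i = c⟩ := extremePoints_subset hw
  obtain ⟨j, hj⟩ : ∃ j, w j ≠ 0 := by
    by_contra! h
    simp [h] at hw1
  by_cases hsingle : ∀ i, i ≠ j → w i = 0
  · have hwj : w j = 1 := by rwa [Fintype.sum_eq_single j hsingle] at hw1
    refine .inl ⟨j, ?_, ?_⟩
    · ext i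
      rcases eq_or_ne i j with rfl | hij
      · simp [hwj]
      · simp [hij, hsingle i hij]
    · rwa [Fintype.sum_eq_single j (fun i hij => by simp [hsingle i hij]), hwj, one_mul] at hwf
  push Not at hsingle
  obtain ⟨i, hij, hi⟩ := hsingle
  have hrest : ∀ k, k ≠ i ∧ k ≠ j → w k = 0 := fun k hk =>
    apply_eq_zero_of_mem_extremePoints_stdSimplexSlice hw hij (Ne.symm hk.1) (Ne.symm hk.2) hi hj
  have hsum : w i + w j = 1 := by rwa [Fintype.sum_eq_add i j hij hrest] at hw1
  have hsumf : w i * f i + w j * f j = c := by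
    rwa [Fintype.sum_eq_add i j hij (fun k hk => by simp [hrest k hk])] at hwf
  refine .inr ⟨i, j, ?_, w i, w j, hw0 i, hw0 j, hsum, ?_⟩
  · refine mul_neg_of_mul_add_mul_eq_zero ((hw0 i).lt_of_ne' hi) ((hw0 j).lt_of_ne' hj)
      (sub_left_injective.ne (apply_ne_of_mem_extremePoints_stdSimplexSlice hw hij hi hj)) ?_
    linear_combination hsumf - c * hsum
  · ext k
    rcases eq_or_ne k i with rfl | hki
    · simp [hij]
    rcases eq_or_ne k j with rfl | hkj
    · simp [hki]
    · simp [hki, hkj, hrest k ⟨hki, hkj⟩]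

end StdSimplexSlice

section LinearCombination

variable {ι E : Type*} [Fintype ι] [AddCommGroup E] [Module ℝ E]

theorem image_linearCombination_stdSimplex (ξ : ι → E) :
    Fintype.linearCombination ℝ ξ '' stdSimplex ℝ ι = convexHull ℝ (range ξ) := by
  classical
  rw [← convexHull_rangle_single_eq_stdSimplex, LinearMap.image_convexHull, ← range_comp]
  congr 2
  ext i
  simp [Fintype.linearCombination_apply_single]

theorem image_linearCombination_stdSimplexSlice (ξ : ι → E) (ℓ : E →ₗ[ℝ] ℝ) (c : ℝ) :
    Fintype.linearCombination ℝ ξ '' stdSimplexSlice (fun i => ℓ (ξ i)) c =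
      {y | ℓ y = c} ∩ convexHull ℝ (range ξ) := by
  have hslice : stdSimplexSlice (fun i => ℓ (ξ i)) c =
      stdSimplex ℝ ι ∩ Fintype.linearCombination ℝ ξ ⁻¹' {y | ℓ y = c} := by
    ext w
    simp [stdSimplexSlice, Fintype.linearCombination_apply, map_sum]
  rw [hslice, image_inter_preimage, image_linearCombination_stdSimplex, inter_comm]

theorem image_linearCombination_segment_single [DecidableEq ι] (ξ : ι → E) (i j : ι) :
    Fintype.linearCombination ℝ ξ '' segment ℝ (Pi.single i 1) (Pi.single j 1) =
      segment ℝ (ξ i) (ξ j) := by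
  simpa [Fintype.linearCombination_apply_single] using
    image_segment ℝ (Fintype.linearCombination ℝ ξ).toAffineMap (Pi.single i 1) (Pi.single j 1)

end LinearCombination

theorem eq_of_mem_segment_of_apply_eq {E : Type*} [AddCommGroup E] [Module ℝ E]
    (ℓ : E →ₗ[ℝ] ℝ) {a b z z' : E} (hab : ℓ a ≠ ℓ b) (hz : z ∈ segment ℝ a b)
    (hz' : z' ∈ segment ℝ a b) (h : ℓ z = ℓ z') : z = z' := by
  rw [segment_eq_image_lineMap] at hz hz'
  obtain ⟨t, -, rfl⟩ := hz
  obtain ⟨t', -, rfl⟩ := hz'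
  rw [← ℓ.coe_toAffineMap, AffineMap.apply_lineMap, AffineMap.apply_lineMap] at h
  rw [AffineMap.lineMap_injective ℝ hab h]

/-- extreme points of the slice of a polytope by the hyperplane
`{y : y^N = c}` are either vertices lying on the hyperplane, or intersections of the
hyperplane with a segment whose endpoints lie strictly on opposite sides. -/
theorem extreme_points_of_hyperplane_slice
    (d m : ℕ) (ξv : Fin (m + 1) → (Fin (d + 1) → ℝ)) (c : ℝ)
    (H : Set (Fin (d + 1) → ℝ)) (hH : H = {y | y (Fin.last d) = c})
    (S : Set (Fin (d + 1) → ℝ))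
    (hS : S = H ∩ convexHull ℝ (Set.range ξv)) :
    ∀ y ∈ S.extremePoints ℝ,
      (∃ j, y = ξv j ∧ ξv j (Fin.last d) = c) ∨
      (∃ i j, (ξv i (Fin.last d) - c) * (ξv j (Fin.last d) - c) < 0 ∧
        y ∈ segment ℝ (ξv i) (ξv j) ∧ y (Fin.last d) = c ∧
        (∀ z ∈ segment ℝ (ξv i) (ξv j), z (Fin.last d) = c → z = y)) := by
  subst hH hS
  intro y hy
  let ℓ : (Fin (d + 1) → ℝ) →ₗ[ℝ] ℝ := LinearMap.proj (Fin.last d)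
  let Φ := Fintype.linearCombination ℝ ξv
  have hyc : y (Fin.last d) = c := (extremePoints_subset hy).1
  have hy_image : y ∈ (Φ '' stdSimplexSlice (fun i => ℓ (ξv i)) c).extremePoints ℝ := by
    rwa [image_linearCombination_stdSimplexSlice ξv ℓ c]
  obtain ⟨w, hw, hwy : Φ w = y⟩ := surjOn_extremePoints_image
    Φ.toContinuousLinearMap.toContinuousAffineMap (isCompact_stdSimplexSlice _ c) hy_image
  rcases mem_extremePoints_stdSimplexSlice hw with ⟨j, rfl, hj⟩ | ⟨i, j, hij, hw_seg⟩
  · exact .inl ⟨j, by simp [← hwy, Φ, Fintype.linearCombination_apply_single], hj⟩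
  have hy_seg : y ∈ segment ℝ (ξv i) (ξv j) :=
    image_linearCombination_segment_single ξv i j ▸ ⟨w, hw_seg, hwy⟩
  have hℓ : ℓ (ξv i) ≠ ℓ (ξv j) := fun h => hij.not_ge (by rw [h]; exact mul_self_nonneg _)
  exact .inr ⟨i, j, hij, hy_seg, hyc, fun z hz hzc =>
    eq_of_mem_segment_of_apply_eq ℓ hℓ hz hy_seg (hzc.trans hyc.symm)⟩
end
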